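/- arXiv:2305.13537 — 6 statements merged into one kernel-verified Lean document; each statement's English description precedes it below -/
import Mathlib

section
/- The category of groupoids internal to the category of types (equivalently, of small groupoids, described as diagrams C₂ ⇉ C₁ ⇉ C₀ with composition m : C₂ → C₁, projections π₁, π₂, inversion i, identities e and domain/codomain d, c satisfying the internal-groupoid axioms) is equivalent to the full subcategory of the category of involutive-2-links in Type consisting of the unital and associative ones. The equivalence is induced by the functor F sending an internal groupoid to (θ, φ, m : C₂ → C₁) with θ = ⟨i∘π₁, m⟩ and φ = ⟨m, i∘π₂⟩. -/
open CategoryTheory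

universe u

/-- A pair of parallel maps is *jointly monomorphic*. -/
def JointlyMono {A B C : Type u} (f : A → B) (g : A → C) : Prop :=
  ∀ a a', f a = f a' → g a = g a' → a = a'

/-- A commutative square of types which is both a pullback and a pushout
(an exact / bicartesian / Dolittle / pulation square). -/
def Bicartesian {P X Y Z : Type u} (fst : P → X) (snd : P → Y)
    (f : X → Z) (g : Y → Z) : Prop :=
  IsPullback (C := Type u) (TypeCat.ofHom fst) (TypeCat.ofHom snd) (TypeCat.ofHom f)
    (TypeCat.ofHom g) ∧
  IsPushout (C := Type u) (TypeCat.ofHom fst) (TypeCat.ofHom snd) (TypeCat.ofHom f)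
    (TypeCat.ofHom g)

/-- An involutive-2-link `(θ, φ, m)` is *unital* (Definition 1(1)). -/
def IsUnitalLink {C₂ C₁ : Type u} (θ φ : C₂ → C₂) (m : C₂ → C₁) : Prop :=
  JointlyMono m (m ∘ θ) ∧ JointlyMono m (m ∘ φ) ∧
  ∃ e₁ e₂ : C₁ → C₂,
    m ∘ e₁ = id ∧ m ∘ e₂ = id ∧
    θ ∘ e₂ = e₂ ∧ φ ∘ e₁ = e₁ ∧
    m ∘ θ ∘ φ ∘ e₂ = m ∘ φ ∘ θ ∘ e₁ ∧
    (m ∘ θ ∘ e₁) ∘ (m ∘ φ) = (m ∘ φ ∘ e₂) ∘ (m ∘ θ) ∧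
    (m ∘ θ ∘ e₁) ∘ m = (m ∘ θ ∘ e₁) ∘ (m ∘ θ) ∧
    (m ∘ φ ∘ e₂) ∘ m = (m ∘ φ ∘ e₂) ∘ (m ∘ φ)

/-- An involutive-2-link `(θ, φ, m)` is *associative* (Definition 1(2)):
the pair `(π₁, π₂) = (m ∘ φ, m ∘ θ)` is bi-exact and the induced morphisms
`m₁, m₂` satisfy `m ∘ m₁ = m ∘ m₂`. -/
def IsAssociativeLink {C₂ C₁ : Type u} (θ φ : C₂ → C₂) (m : C₂ → C₁) : Prop :=
  ∃ (C₀ : Type u) (d c : C₁ → C₀) (C₃ : Type u) (p₁ p₂ : C₃ → C₂),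
    Bicartesian (m ∘ φ) (m ∘ θ) d c ∧
    Bicartesian p₂ p₁ (m ∘ φ) (m ∘ θ) ∧
    ∃ m₁ m₂ : C₃ → C₂,
      (m ∘ φ) ∘ m₁ = m ∘ p₁ ∧ (m ∘ θ) ∘ m₁ = (m ∘ θ) ∘ p₂ ∧
      (m ∘ φ) ∘ m₂ = (m ∘ φ) ∘ p₁ ∧ (m ∘ θ) ∘ m₂ = m ∘ p₂ ∧
      m ∘ m₁ = m ∘ m₂

/-- An internal groupoid in the category of types, presented as a diagram
`C₂ ⇉ C₁ ⇉ C₀` where `C₂` is the canonical pullback of `d` and `c`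
(composable pairs), with composition `m`, inversion `i`, identities `e`. -/
structure IntGpd : Type (u + 1) where
  C₀ : Type u
  C₁ : Type u
  d : C₁ → C₀
  c : C₁ → C₀
  e : C₀ → C₁
  i : C₁ → C₁
  m : (y x : C₁) → d y = c x → C₁
  de : ∀ a, d (e a) = a
  ce : ∀ a, c (e a) = a
  dm : ∀ y x h, d (m y x h) = d x
  cm : ∀ y x h, c (m y x h) = c y
  di : ∀ x, d (i x) = c x
  ci : ∀ x, c (i x) = d x
  ii : ∀ x, i (i x) = x
  ie : ∀ a, i (e a) = e a
  idr : ∀ x (h : d x = c (e (d x))), m x (e (d x)) h = x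
  idl : ∀ x (h : d (e (c x)) = c x), m (e (c x)) x h = x
  invr : ∀ x (h : d x = c (i x)), m x (i x) h = e (c x)
  invl : ∀ x (h : d (i x) = c x), m (i x) x h = e (d x)
  assoc : ∀ z y x (hzy : d z = c y) (hyx : d y = c x)
    (h₁ : d (m z y hzy) = c x) (h₂ : d z = c (m y x hyx)),
    m (m z y hzy) x h₁ = m z (m y x hyx) h₂

namespace IntGpd

variable (G : IntGpd.{u})

/-- The object of composable pairs. -/
def Pairs : Type u := {p : G.C₁ × G.C₁ // G.d p.1 = G.c p.2}

theorem m_congr {y y' x x' : G.C₁} (hy : y = y') (hx : x = x')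
    (h : G.d y = G.c x) (h' : G.d y' = G.c x') :
    G.m y x h = G.m y' x' h' := by subst hy; subst hx; rfl

/-- Composition as a map on composable pairs. -/
def mp : G.Pairs → G.C₁ := fun p => G.m p.1.1 p.1.2 p.2

/-- The involution `θ = ⟨i ∘ π₁, m⟩`. -/
def θp : G.Pairs → G.Pairs :=
  fun p => ⟨(G.i p.1.1, G.mp p), by rw [G.di, mp, G.cm]⟩

/-- The involution `φ = ⟨m, i ∘ π₂⟩`. -/
def φp : G.Pairs → G.Pairs :=
  fun p => ⟨(G.mp p, G.i p.1.2), by rw [G.ci, mp, G.dm]⟩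

theorem m_inv_m (y x : G.C₁) (h : G.d y = G.c x)
    (h₂ : G.d (G.i y) = G.c (G.m y x h)) :
    G.m (G.i y) (G.m y x h) h₂ = x := by
  rw [← G.assoc (G.i y) y x (by rw [G.di]) h (by rw [G.dm]; exact h) h₂]
  rw [G.m_congr (y := G.m (G.i y) y (by rw [G.di])) (y' := G.e (G.c x))
    (x := x) (x' := x) (by rw [G.invl]; exact congrArg G.e h) rfl _ (by rw [G.de])]
  exact G.idl x _

theorem m_m_inv (y x : G.C₁) (h : G.d y = G.c x)
    (h₂ : G.d (G.m y x h) = G.c (G.i x)) :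
    G.m (G.m y x h) (G.i x) h₂ = y := by
  rw [G.assoc y x (G.i x) h (by rw [G.ci]) h₂ (by rw [G.cm, ← h])]
  rw [G.m_congr (y := y) (y' := y) (x := G.m x (G.i x) (by rw [G.ci]))
    (x' := G.e (G.d y)) rfl (by rw [G.invr]; exact congrArg G.e h.symm) _ (by rw [G.ce])]
  exact G.idr y _

theorem θθ : G.θp ∘ G.θp = id := by
  funext p
  apply Subtype.ext
  apply Prod.ext
  · simp [θp, mp, G.ii]
  · simp only [θp, mp, Function.comp_apply, id_eq]
    exact G.m_inv_m p.1.1 p.1.2 p.2 _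

theorem φφ : G.φp ∘ G.φp = id := by
  funext p
  apply Subtype.ext
  apply Prod.ext
  · simp only [φp, mp, Function.comp_apply, id_eq]
    exact G.m_m_inv p.1.1 p.1.2 p.2 _
  · simp [φp, mp, G.ii]

theorem braid : G.θp ∘ G.φp ∘ G.θp = G.φp ∘ G.θp ∘ G.φp := by
  funext p
  -- names
  apply Subtype.ext
  apply Prod.ext
  · -- first components
    simp only [Function.comp_apply, θp, φp, mp]
    rw [G.m_inv_m, G.m_inv_m]
  · simp only [Function.comp_apply, θp, φp, mp]
    rw [G.m_m_inv, G.m_m_inv]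

end IntGpd

/-- An involutive-2-link in the category of types: a map `m : A → B`
together with two interlinked involutions on its domain. -/
structure I2L : Type (u + 1) where
  A : Type u
  B : Type u
  θ : A → A
  φ : A → A
  m : A → B
  θθ : θ ∘ θ = id
  φφ : φ ∘ φ = id
  braid : θ ∘ φ ∘ θ = φ ∘ θ ∘ φ

/-- Morphisms of involutive-2-links. -/
structure I2LHom (L M : I2L.{u}) : Type u where
  f : L.A → M.A
  g : L.B → M.B
  commθ : f ∘ L.θ = M.θ ∘ f
  commφ : f ∘ L.φ = M.φ ∘ f
  commm : M.m ∘ f = g ∘ L.m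

theorem I2LHom.ext' {L M : I2L.{u}} {u v : I2LHom L M}
    (h1 : u.f = v.f) (h2 : u.g = v.g) : u = v := by
  cases u; cases v; simp_all

/-- The category of involutive-2-links in the category of types. -/
instance : Category I2L.{u} where
  Hom := I2LHom
  id L := ⟨id, id, rfl, rfl, rfl⟩
  comp u v := ⟨v.f ∘ u.f, v.g ∘ u.g,
    by rw [Function.comp_assoc, u.commθ, ← Function.comp_assoc, v.commθ,
      Function.comp_assoc],
    by rw [Function.comp_assoc, u.commφ, ← Function.comp_assoc, v.commφ,
      Function.comp_assoc],
    by rw [← Function.comp_assoc, v.commm, Function.comp_assoc, u.commm,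
      ← Function.comp_assoc]⟩
  id_comp u := I2LHom.ext' rfl rfl
  comp_id u := I2LHom.ext' rfl rfl
  assoc u v w := I2LHom.ext' rfl rfl

/-- Morphisms of internal groupoids (internal functors). -/
structure IntGpdHom (G H : IntGpd.{u}) : Type u where
  f₀ : G.C₀ → H.C₀
  f₁ : G.C₁ → H.C₁
  hd : ∀ x, H.d (f₁ x) = f₀ (G.d x)
  hc : ∀ x, H.c (f₁ x) = f₀ (G.c x)
  he : ∀ a, f₁ (G.e a) = H.e (f₀ a)
  hi : ∀ x, f₁ (G.i x) = H.i (f₁ x)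
  hm : ∀ y x (h : G.d y = G.c x) (h' : H.d (f₁ y) = H.c (f₁ x)),
    f₁ (G.m y x h) = H.m (f₁ y) (f₁ x) h'

theorem IntGpdHom.ext' {G H : IntGpd.{u}} {u v : IntGpdHom G H}
    (h0 : u.f₀ = v.f₀) (h1 : u.f₁ = v.f₁) : u = v := by
  cases u; cases v; simp_all

/-- The category of internal groupoids in the category of types. -/
instance : Category IntGpd.{u} where
  Hom := IntGpdHom
  id G := ⟨id, id, fun _ => rfl, fun _ => rfl, fun _ => rfl, fun _ => rfl,
    fun y x h h' => G.m_congr rfl rfl h h'⟩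
  comp {G H K} u v :=
    ⟨v.f₀ ∘ u.f₀, v.f₁ ∘ u.f₁,
      fun x => by simp [v.hd, u.hd],
      fun x => by simp [v.hc, u.hc],
      fun a => by simp [u.he, v.he],
      fun x => by simp [u.hi, v.hi],
      fun y x h h' => by
        simp only [Function.comp_apply]
        rw [u.hm y x h (by rw [u.hd, u.hc, h]),
          v.hm _ _ (by rw [u.hd, u.hc, h]) h']⟩
  id_comp u := IntGpdHom.ext' rfl rfl
  comp_id u := IntGpdHom.ext' rfl rfl
  assoc u v w := IntGpdHom.ext' rfl rfl

/-- The object part of the functor `F`: it forgets the underlying reflexive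
graph, keeps `m : C₂ → C₁` and contracts the remaining information into the
two involutions `θ = ⟨i ∘ π₁, m⟩` and `φ = ⟨m, i ∘ π₂⟩`. -/
def FObj (G : IntGpd.{u}) : I2L.{u} where
  A := G.Pairs
  B := G.C₁
  θ := G.θp
  φ := G.φp
  m := G.mp
  θθ := G.θθ
  φφ := G.φφ
  braid := G.braid

/-- The morphism part of the functor `F`. -/
def FHom {G H : IntGpd.{u}} (u : G ⟶ H) : FObj G ⟶ FObj H where
  f p := ⟨(u.f₁ p.1.1, u.f₁ p.1.2), by rw [u.hd, u.hc, p.2]⟩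
  g := u.f₁
  commθ := by
    funext p
    apply Subtype.ext
    apply Prod.ext
    · exact u.hi p.1.1
    · exact u.hm p.1.1 p.1.2 p.2 _
  commφ := by
    funext p
    apply Subtype.ext
    apply Prod.ext
    · exact u.hm p.1.1 p.1.2 p.2 _
    · exact u.hi p.1.2
  commm := by
    funext p
    exact (u.hm p.1.1 p.1.2 p.2 _).symm

/-- Involutive-2-links which are unital and associative. -/
def GoodLink (L : I2L.{u}) : Prop :=
  IsUnitalLink L.θ L.φ L.m ∧ IsAssociativeLink L.θ L.φ L.m


/-!
`F` sends `G` to `(θ, φ, m)` on composable pairs, where `π₁ = m ∘ φ` and `π₂ = m ∘ θ` are the two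
projections. Its two squares are canonical pullbacks of split epimorphisms, and in `Type` a
pullback of surjections is also a pushout; so `F G` is associative, and unital with
`e₁ b = (b, 1)`, `e₂ b = (1, b)`. `F` is faithful because `f₀ = c ∘ f₁ ∘ e`, and full because a
morphism of links commutes with `π₁` and `π₂`, hence acts as `f₁ × f₁` on pairs; then `f₁`
preserves composition, inverses and, being idempotents, identities.

Conversely, for a unital associative link the first pullback identifies `A` with the composable
pairs of `B` over `C₀`, and composition is `m` read through this identification. Identities are
glued along the pushout from `π₂ ∘ e₁` (at sources) and `π₁ ∘ e₂` (at targets), the inverse is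
`π₂ ∘ φ ∘ e₂`, and associativity is read off the second pullback and `m₁`, `m₂`. Uniqueness of
division gives `π₁ ∘ θ = i ∘ π₁` and `π₂ ∘ φ = i ∘ π₂`, which make the identification an
isomorphism of links with `F` of the groupoid so built.
-/

open CategoryTheory.Limits Function

section TypeSquares

variable {X Y Z : Type u} {f : X → Z} {g : Y → Z}

theorem isPullback_pullback (f : X → Z) (g : Y → Z) :
    IsPullback (C := Type u) (↾(Pullback.fst : f.Pullback g → X)) (↾Pullback.snd) (↾f) (↾g) := by
  rw [Types.isPullback_iff]
  exact ⟨ConcreteCategory.hom_ext _ _ fun p => p.2,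
    fun _ _ h => Subtype.ext (Prod.ext h.1 h.2), fun x y h => ⟨⟨(x, y), h⟩, rfl, rfl⟩⟩

theorem isPushout_pullback_of_surjective (hf : Surjective f) (hg : Surjective g) :
    IsPushout (C := Type u) (↾(Pullback.fst : f.Pullback g → X)) (↾Pullback.snd) (↾f) (↾g) := by
  have glue : ∀ (s : PushoutCocone (C := Type u) (↾(Pullback.fst : f.Pullback g → X))
      (↾Pullback.snd)) x y, f x = g y → s.inl x = s.inr y :=
    fun s x y h => types_congr_hom s.condition ⟨(x, y), h⟩
  refine IsPushout.of_isColimit (PushoutCocone.IsColimit.mk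
    (ConcreteCategory.hom_ext _ _ fun p => p.2)
    (fun s => ↾fun z => s.inr (surjInv hg z))
    (fun s => ConcreteCategory.hom_ext _ _ fun x => ?_)
    (fun s => ConcreteCategory.hom_ext _ _ fun y => ?_)
    (fun s k _ hr => ConcreteCategory.hom_ext _ _ fun z => ?_))
  · exact (glue s x _ (surjInv_eq hg (f x)).symm).symm
  · show s.inr (surjInv hg (g y)) = s.inr y
    -- `y` and `surjInv hg (g y)` are both glued to any `x` over `g y`
    obtain ⟨x, hx⟩ := hf (g y)
    rw [← glue s x y hx, glue s x _ (hx.trans (surjInv_eq hg _).symm)]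
  · show k z = s.inr (surjInv hg z)
    rw [← types_congr_hom hr, types_comp_apply, TypeCat.ofHom_apply, surjInv_eq hg]

theorem bicartesian_pullback_of_surjective (hf : Surjective f) (hg : Surjective g) :
    Bicartesian (Pullback.fst : f.Pullback g → X) Pullback.snd f g :=
  ⟨isPullback_pullback f g, isPushout_pullback_of_surjective hf hg⟩

end TypeSquares

namespace I2L

variable (L : I2L.{u})

def π₁ : L.A → L.B := L.m ∘ L.φ

def π₂ : L.A → L.B := L.m ∘ L.θ

theorem θ_θ (a : L.A) : L.θ (L.θ a) = a := congrFun L.θθ a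

theorem φ_φ (a : L.A) : L.φ (L.φ a) = a := congrFun L.φφ a

theorem π₁_φ (a : L.A) : L.π₁ (L.φ a) = L.m a := congrArg L.m (L.φ_φ a)

theorem π₂_θ (a : L.A) : L.π₂ (L.θ a) = L.m a := congrArg L.m (L.θ_θ a)

variable {L} {M : I2L.{u}}

def isoMk (f : L.A ≃ M.A) (g : L.B ≃ M.B) (hθ : ∀ a, f (L.θ a) = M.θ (f a))
    (hφ : ∀ a, f (L.φ a) = M.φ (f a)) (hm : ∀ a, M.m (f a) = g (L.m a)) : L ≅ M where
  hom := ⟨f, g, funext hθ, funext hφ, funext hm⟩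
  inv :=
    ⟨f.symm, g.symm,
      funext fun _ => f.symm_apply_eq.mpr (by rw [comp_apply, hθ, f.apply_symm_apply]),
      funext fun _ => f.symm_apply_eq.mpr (by rw [comp_apply, hφ, f.apply_symm_apply]),
      funext fun _ => g.eq_symm_apply.mpr (by rw [comp_apply, ← hm, f.apply_symm_apply])⟩
  hom_inv_id := I2LHom.ext' (funext f.symm_apply_apply) (funext g.symm_apply_apply)
  inv_hom_id := I2LHom.ext' (funext f.apply_symm_apply) (funext g.apply_symm_apply)

end I2L

namespace I2LHom

variable {L M : I2L.{u}} (w : L ⟶ M)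

theorem π₁_f (a : L.A) : M.π₁ (w.f a) = w.g (L.π₁ a) :=
  (congrArg M.m (congrFun w.commφ a)).symm.trans (congrFun w.commm _)

theorem π₂_f (a : L.A) : M.π₂ (w.f a) = w.g (L.π₂ a) :=
  (congrArg M.m (congrFun w.commθ a)).symm.trans (congrFun w.commm _)

end I2LHom

namespace IntGpd

variable (G : IntGpd.{u})

theorem d_e_eq_c_e (a : G.C₀) : G.d (G.e a) = G.c (G.e a) := by rw [G.de, G.ce]

theorem m_e_self (a : G.C₀) : G.m (G.e a) (G.e a) (G.d_e_eq_c_e a) = G.e a :=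
  (G.m_congr (congrArg G.e (G.ce a).symm) rfl _ (by rw [G.de, G.ce])).trans (G.idl _ _)

theorem eq_e_of_m_self {b : G.C₁} (h : G.d b = G.c b) (hb : G.m b b h = b) :
    b = G.e (G.c b) := by
  calc b = G.m (G.m b b h) (G.i b) (by rw [G.ci, G.dm]) := (G.m_m_inv b b h _).symm
    _ = G.m b (G.i b) (by rw [G.ci, h]) := G.m_congr hb rfl _ _
    _ = G.e (G.c b) := G.invr b _

theorem m_right_cancel {u u' w : G.C₁} (h : G.d u = G.c w) (h' : G.d u' = G.c w)
    (huu' : G.m u w h = G.m u' w h') : u = u' := by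
  rw [← G.m_m_inv u w h (by rw [G.ci, G.dm]), ← G.m_m_inv u' w h' (by rw [G.ci, G.dm])]
  exact G.m_congr huu' rfl _ _

theorem m_left_cancel {w v v' : G.C₁} (h : G.d w = G.c v) (h' : G.d w = G.c v')
    (hvv' : G.m w v h = G.m w v' h') : v = v' := by
  rw [← G.m_inv_m w v h (by rw [G.di, G.cm]), ← G.m_inv_m w v' h' (by rw [G.di, G.cm])]
  exact G.m_congr rfl hvv' _ _

theorem eq_i_of_m_eq_right {u y x w : G.C₁} (h : G.d y = G.c x) (hw : G.m y x h = w)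
    (h' : G.d u = G.c w) (hu : G.m u w h' = x) : u = G.i y := by
  subst hw
  exact G.m_right_cancel h' (by rw [G.di, G.cm]) (hu.trans (G.m_inv_m y x h _).symm)

theorem eq_i_of_m_eq_left {v y x w : G.C₁} (h : G.d y = G.c x) (hw : G.m y x h = w)
    (h' : G.d w = G.c v) (hv : G.m w v h' = y) : v = G.i x := by
  subst hw
  exact G.m_left_cancel h' (by rw [G.ci, G.dm]) (hv.trans (G.m_m_inv y x h _).symm)

theorem mp_φp (p : G.Pairs) : G.mp (G.φp p) = p.1.1 := G.m_m_inv p.1.1 p.1.2 p.2 _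

theorem mp_θp (p : G.Pairs) : G.mp (G.θp p) = p.1.2 := G.m_inv_m p.1.1 p.1.2 p.2 _

def pairIdRight (b : G.C₁) : G.Pairs := ⟨(b, G.e (G.d b)), (G.ce _).symm⟩

def pairIdLeft (b : G.C₁) : G.Pairs := ⟨(G.e (G.c b), b), G.de _⟩

theorem mp_pairIdRight (b : G.C₁) : G.mp (G.pairIdRight b) = b := G.idr b _

theorem mp_pairIdLeft (b : G.C₁) : G.mp (G.pairIdLeft b) = b := G.idl b _

theorem θp_pairIdLeft (b : G.C₁) : G.θp (G.pairIdLeft b) = G.pairIdLeft b :=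
  Subtype.ext (Prod.ext (G.ie _) (G.mp_pairIdLeft b))

theorem φp_pairIdRight (b : G.C₁) : G.φp (G.pairIdRight b) = G.pairIdRight b :=
  Subtype.ext (Prod.ext (G.mp_pairIdRight b) (G.ie _))

theorem jointlyMono_mp_θp : JointlyMono G.mp (G.mp ∘ G.θp) := by
  intro p p' hm hθ
  simp only [comp_apply, mp_θp] at hθ
  have hfst : p.1.1 = p'.1.1 := by
    rw [← G.m_m_inv p.1.1 p.1.2 p.2 (by rw [G.ci, G.dm]),
      ← G.m_m_inv p'.1.1 p'.1.2 p'.2 (by rw [G.ci, G.dm])]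
    exact G.m_congr hm (congrArg G.i hθ) _ _
  exact Subtype.ext (Prod.ext hfst hθ)

theorem jointlyMono_mp_φp : JointlyMono G.mp (G.mp ∘ G.φp) := by
  intro p p' hm hφ
  simp only [comp_apply, mp_φp] at hφ
  have hsnd : p.1.2 = p'.1.2 := by
    rw [← G.m_inv_m p.1.1 p.1.2 p.2 (by rw [G.di, G.cm]),
      ← G.m_inv_m p'.1.1 p'.1.2 p'.2 (by rw [G.di, G.cm])]
    exact G.m_congr (congrArg G.i hφ) hm _ _
  exact Subtype.ext (Prod.ext hφ hsnd)

theorem isUnitalLink : IsUnitalLink G.θp G.φp G.mp := by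
  refine ⟨G.jointlyMono_mp_θp, G.jointlyMono_mp_φp, G.pairIdRight, G.pairIdLeft,
    funext G.mp_pairIdRight, funext G.mp_pairIdLeft, funext G.θp_pairIdLeft,
    funext G.φp_pairIdRight, ?_, ?_, ?_, ?_⟩ <;> funext p <;>
    simp only [comp_apply, mp_θp, mp_φp]
  · rfl
  · exact congrArg G.e p.2
  · exact congrArg G.e (G.dm _ _ _)
  · exact congrArg G.e (G.cm _ _ _)

theorem isAssociativeLink : IsAssociativeLink G.θp G.φp G.mp := by
  have hφ : G.mp ∘ G.φp = Pullback.fst := funext G.mp_φp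
  have hθ : G.mp ∘ G.θp = Pullback.snd := funext G.mp_θp
  have surj_fst : Surjective (Pullback.fst : G.d.Pullback G.c → G.C₁) :=
    fun b => ⟨G.pairIdRight b, rfl⟩
  have surj_snd : Surjective (Pullback.snd : G.d.Pullback G.c → G.C₁) :=
    fun b => ⟨G.pairIdLeft b, rfl⟩
  unfold IsAssociativeLink
  rw [hφ, hθ]
  refine ⟨G.C₀, G.d, G.c, _, Pullback.snd, Pullback.fst,
    bicartesian_pullback_of_surjective (fun a => ⟨G.e a, G.de a⟩) (fun a => ⟨G.e a, G.ce a⟩),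
    bicartesian_pullback_of_surjective surj_fst surj_snd,
    fun t => ⟨(G.mp t.1.2, t.1.1.1.2),
      (G.dm _ _ _).trans ((congrArg G.d t.2.symm).trans t.1.1.2)⟩,
    fun t => ⟨(t.1.2.1.1, G.mp t.1.1),
      t.1.2.2.trans ((congrArg G.c t.2.symm).trans (G.cm _ _ _).symm)⟩,
    rfl, rfl, rfl, rfl, ?_⟩
  funext ⟨⟨⟨⟨y, x⟩, hyx⟩, ⟨⟨z, y'⟩, hzy⟩⟩, h⟩
  obtain rfl : y = y' := h
  exact G.assoc z y x hzy hyx _ _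

end IntGpd

theorem FObj_π₁ (G : IntGpd.{u}) (p : G.Pairs) : (FObj G).π₁ p = p.1.1 := G.mp_φp p

theorem FObj_π₂ (G : IntGpd.{u}) (p : G.Pairs) : (FObj G).π₂ p = p.1.2 := G.mp_θp p

def linkFunctor : IntGpd.{u} ⥤ I2L.{u} where
  obj := FObj
  map := FHom
  map_id _ := I2LHom.ext' rfl rfl
  map_comp _ _ := I2LHom.ext' rfl rfl

theorem goodLink_linkFunctor_obj (G : IntGpd.{u}) : GoodLink (linkFunctor.obj G) :=
  ⟨G.isUnitalLink, G.isAssociativeLink⟩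

theorem IntGpdHom.f₀_eq {G H : IntGpd.{u}} (u : G ⟶ H) (a : G.C₀) :
    u.f₀ a = H.c (u.f₁ (G.e a)) := by
  rw [u.hc, G.ce]

instance : linkFunctor.{u}.Faithful where
  map_injective {G H u v} h := by
    have hf₁ : u.f₁ = v.f₁ := congrArg I2LHom.g h
    exact IntGpdHom.ext' (funext fun a => by rw [u.f₀_eq, v.f₀_eq, hf₁]) hf₁

namespace I2LHom

variable {G H : IntGpd.{u}} (w : FObj G ⟶ FObj H)

theorem fst_f (p : G.Pairs) : (w.f p).1.1 = w.g p.1.1 :=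
  (FObj_π₁ H _).symm.trans ((w.π₁_f p).trans (congrArg w.g (FObj_π₁ G p)))

theorem snd_f (p : G.Pairs) : (w.f p).1.2 = w.g p.1.2 :=
  (FObj_π₂ H _).symm.trans ((w.π₂_f p).trans (congrArg w.g (FObj_π₂ G p)))

theorem d_g_eq_c_g {y x : G.C₁} (h : G.d y = G.c x) : H.d (w.g y) = H.c (w.g x) := by
  rw [← w.fst_f ⟨(y, x), h⟩, ← w.snd_f ⟨(y, x), h⟩]
  exact (w.f ⟨(y, x), h⟩).2

theorem g_m {y x : G.C₁} (h : G.d y = G.c x) (h' : H.d (w.g y) = H.c (w.g x)) :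
    w.g (G.m y x h) = H.m (w.g y) (w.g x) h' :=
  (congrFun w.commm ⟨(y, x), h⟩).symm.trans (H.m_congr (w.fst_f _) (w.snd_f _) _ h')

theorem g_i (y : G.C₁) : w.g (G.i y) = H.i (w.g y) :=
  (w.fst_f (G.θp (G.pairIdRight y))).symm.trans
    ((congrArg (fun q : H.Pairs => q.1.1) (congrFun w.commθ _)).trans
      (congrArg H.i (w.fst_f _)))

theorem g_e (a : G.C₀) : w.g (G.e a) = H.e (H.c (w.g (G.e a))) := by
  refine H.eq_e_of_m_self (w.d_g_eq_c_g (G.d_e_eq_c_e a)) ?_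
  rw [← w.g_m (G.d_e_eq_c_e a), G.m_e_self]

end I2LHom

def IntGpdHom.ofLinkHom {G H : IntGpd.{u}} (w : FObj G ⟶ FObj H) : G ⟶ H where
  f₀ a := H.c (w.g (G.e a))
  f₁ := w.g
  hd y := w.d_g_eq_c_g (G.pairIdRight y).2
  hc y := (w.d_g_eq_c_g (G.pairIdLeft y).2).symm.trans (w.d_g_eq_c_g (G.d_e_eq_c_e _))
  he := w.g_e
  hi := w.g_i
  hm _ _ := w.g_m

instance : linkFunctor.{u}.Full where
  map_surjective w :=
    ⟨IntGpdHom.ofLinkHom w, I2LHom.ext' (funext fun p =>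
      Subtype.ext (Prod.ext (w.fst_f p).symm (w.snd_f p).symm)) rfl⟩

/-- In groupoid terms `e₁ b = (b, 1)` and `e₂ b = (1, b)`, so `π₂ (e₁ b)` and `π₁ (e₂ b)` are the
identities at the source and at the target of `b`. The field `assoc` is what the second
bicartesian square provides: `b = m₁ t` and `b' = m₂ t` for the triple `t` over `(a, a')`. -/
structure GoodLinkData (L : I2L.{u}) where
  C₀ : Type u
  d : L.B → C₀
  c : L.B → C₀
  isPullback : IsPullback (C := Type u) (↾L.π₁) (↾L.π₂) (↾d) (↾c)
  isPushout : IsPushout (C := Type u) (↾L.π₁) (↾L.π₂) (↾d) (↾c)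
  e₁ : L.B → L.A
  e₂ : L.B → L.A
  jointlyMono_π₂ : JointlyMono L.m L.π₂
  m_e₁ : ∀ b, L.m (e₁ b) = b
  m_e₂ : ∀ b, L.m (e₂ b) = b
  θ_e₂ : ∀ b, L.θ (e₂ b) = e₂ b
  φ_e₁ : ∀ b, L.φ (e₁ b) = e₁ b
  π₂_φ_e₂ : ∀ b, L.π₂ (L.φ (e₂ b)) = L.π₁ (L.θ (e₁ b))
  π₂_e₁_π₁ : ∀ a, L.π₂ (e₁ (L.π₁ a)) = L.π₁ (e₂ (L.π₂ a))
  π₂_e₁_m : ∀ a, L.π₂ (e₁ (L.m a)) = L.π₂ (e₁ (L.π₂ a))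
  π₁_e₂_m : ∀ a, L.π₁ (e₂ (L.m a)) = L.π₁ (e₂ (L.π₁ a))
  assoc : ∀ a a', L.π₁ a = L.π₂ a' → ∃ b b', L.π₁ b = L.m a' ∧ L.π₂ b = L.π₂ a ∧
    L.π₁ b' = L.π₁ a' ∧ L.π₂ b' = L.m a ∧ L.m b = L.m b'

theorem GoodLink.nonempty_data {L : I2L.{u}} (hL : GoodLink L) : Nonempty (GoodLinkData L) := by
  obtain ⟨⟨jm, -, e₁, e₂, h₁, h₂, h₃, h₄, h₅, h₆, h₇, h₈⟩,
    ⟨C₀, d, c, C₃, p₁, p₂, ⟨hpb, hpo⟩, ⟨hpb₃, -⟩, m₁, m₂, k₁, k₂, k₃, k₄, k₅⟩⟩ := hL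
  refine ⟨⟨C₀, d, c, hpb, hpo, e₁, e₂, jm, congrFun h₁, congrFun h₂, congrFun h₃,
    congrFun h₄, congrFun h₅, congrFun h₆, congrFun h₇, congrFun h₈, fun a a' h => ?_⟩⟩
  obtain ⟨t, rfl, rfl⟩ := Types.exists_of_isPullback hpb₃ a a' h
  exact ⟨m₁ t, m₂ t, congrFun k₁ t, congrFun k₂ t, congrFun k₃ t, congrFun k₄ t, congrFun k₅ t⟩

namespace GoodLinkData

variable {L : I2L.{u}} (D : GoodLinkData L)

theorem comm (a : L.A) : D.d (L.π₁ a) = D.c (L.π₂ a) := types_congr_hom D.isPullback.w a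

theorem ext (D : GoodLinkData L) {a a' : L.A} (h₁ : L.π₁ a = L.π₁ a')
    (h₂ : L.π₂ a = L.π₂ a') : a = a' :=
  Types.ext_of_isPullback D.isPullback h₁ h₂

noncomputable def pair (y x : L.B) (h : D.d y = D.c x) : L.A :=
  (Types.exists_of_isPullback D.isPullback y x h).choose

theorem π₁_pair {y x : L.B} (h : D.d y = D.c x) : L.π₁ (D.pair y x h) = y :=
  (Types.exists_of_isPullback D.isPullback y x h).choose_spec.1

theorem π₂_pair {y x : L.B} (h : D.d y = D.c x) : L.π₂ (D.pair y x h) = x :=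
  (Types.exists_of_isPullback D.isPullback y x h).choose_spec.2

theorem eq_pair {a : L.A} {y x : L.B} (h : D.d y = D.c x) (h₁ : L.π₁ a = y)
    (h₂ : L.π₂ a = x) : a = D.pair y x h :=
  D.ext (h₁.trans (D.π₁_pair h).symm) (h₂.trans (D.π₂_pair h).symm)

theorem pair_π (a : L.A) : D.pair (L.π₁ a) (L.π₂ a) (D.comm a) = a :=
  (D.eq_pair _ rfl rfl).symm

theorem π₁_e₁ (b : L.B) : L.π₁ (D.e₁ b) = b := by
  rw [I2L.π₁, comp_apply, D.φ_e₁, D.m_e₁]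

theorem π₂_e₂ (b : L.B) : L.π₂ (D.e₂ b) = b := by
  rw [I2L.π₂, comp_apply, D.θ_e₂, D.m_e₂]

theorem c_π₂_e₁ (b : L.B) : D.c (L.π₂ (D.e₁ b)) = D.d b := by
  rw [← D.comm, π₁_e₁]

theorem d_π₁_e₂ (b : L.B) : D.d (L.π₁ (D.e₂ b)) = D.c b := by
  rw [D.comm, π₂_e₂]

theorem π₂_e₁_π₂_e₁ (b : L.B) : L.π₂ (D.e₁ (L.π₂ (D.e₁ b))) = L.π₂ (D.e₁ b) := by
  rw [← D.π₂_e₁_m, D.m_e₁]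

theorem π₁_e₂_π₁_e₂ (b : L.B) : L.π₁ (D.e₂ (L.π₁ (D.e₂ b))) = L.π₁ (D.e₂ b) := by
  rw [← D.π₁_e₂_m, D.m_e₂]

theorem d_π₂_e₁ (b : L.B) : D.d (L.π₂ (D.e₁ b)) = D.d b := by
  rw [← D.c_π₂_e₁, π₂_e₁_π₂_e₁, c_π₂_e₁]

theorem c_π₁_e₂ (b : L.B) : D.c (L.π₁ (D.e₂ b)) = D.c b := by
  rw [← D.d_π₁_e₂, π₁_e₂_π₁_e₂, d_π₁_e₂]

theorem d_m (a : L.A) : D.d (L.m a) = D.d (L.π₂ a) := by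
  rw [← D.d_π₂_e₁, π₂_e₁_m, d_π₂_e₁]

theorem c_m (a : L.A) : D.c (L.m a) = D.c (L.π₁ a) := by
  rw [← D.c_π₁_e₂, π₁_e₂_m, c_π₁_e₂]

noncomputable def e (t : D.C₀) : L.B :=
  D.isPushout.desc (↾fun b => L.π₂ (D.e₁ b)) (↾fun b => L.π₁ (D.e₂ b))
    (ConcreteCategory.hom_ext _ _ D.π₂_e₁_π₁) t

theorem e_d (b : L.B) : D.e (D.d b) = L.π₂ (D.e₁ b) :=
  types_congr_hom (D.isPushout.inl_desc _ _ _) b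

theorem e_c (b : L.B) : D.e (D.c b) = L.π₁ (D.e₂ b) :=
  types_congr_hom (D.isPushout.inr_desc _ _ _) b

theorem funext_C₀ {T : Type u} {f g : D.C₀ → T} (hd : ∀ b, f (D.d b) = g (D.d b))
    (hc : ∀ b, f (D.c b) = g (D.c b)) (t : D.C₀) : f t = g t :=
  types_congr_hom (D.isPushout.hom_ext (k := ↾f) (l := ↾g)
    (ConcreteCategory.hom_ext _ _ hd) (ConcreteCategory.hom_ext _ _ hc)) t

theorem d_e (t : D.C₀) : D.d (D.e t) = t :=
  D.funext_C₀ (f := D.d ∘ D.e) (g := id)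
    (fun _ => by simp only [comp_apply, e_d, d_π₂_e₁, id])
    (fun _ => by simp only [comp_apply, e_c, d_π₁_e₂, id]) t

theorem c_e (t : D.C₀) : D.c (D.e t) = t :=
  D.funext_C₀ (f := D.c ∘ D.e) (g := id)
    (fun _ => by simp only [comp_apply, e_d, c_π₂_e₁, id])
    (fun _ => by simp only [comp_apply, e_c, c_π₁_e₂, id]) t

/-- In groupoid terms `φ (1, b) = (b, b⁻¹)`. -/
def inv (b : L.B) : L.B := L.π₂ (L.φ (D.e₂ b))

theorem π₁_θ_e₁ (b : L.B) : L.π₁ (L.θ (D.e₁ b)) = D.inv b := (D.π₂_φ_e₂ b).symm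

theorem d_inv (b : L.B) : D.d (D.inv b) = D.c b := by
  rw [← π₁_θ_e₁, comm, L.π₂_θ, m_e₁]

theorem c_inv (b : L.B) : D.c (D.inv b) = D.d b := by
  rw [inv, ← comm, L.π₁_φ, m_e₂]

theorem θ_e₁_inv (b : L.B) : L.θ (D.e₁ (D.inv b)) = L.φ (D.e₂ b) :=
  D.jointlyMono_π₂ _ _
    (by
      change L.π₂ (D.e₁ (D.inv b)) = L.π₁ (D.e₂ b)
      rw [← e_d, d_inv, e_c])
    (by rw [L.π₂_θ, m_e₁]; rfl)

theorem inv_inv (b : L.B) : D.inv (D.inv b) = b := by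
  rw [← π₁_θ_e₁, θ_e₁_inv, L.π₁_φ, m_e₂]

theorem inv_eq_self_of_π₂_e₁ {x : L.B} (hx : L.π₂ (D.e₁ x) = x) : D.inv x = x := by
  have hθ : L.θ (D.e₁ x) = D.e₁ x :=
    D.jointlyMono_π₂ _ _ (hx.trans (D.m_e₁ x).symm) (by rw [L.π₂_θ, m_e₁, hx])
  rw [← π₁_θ_e₁, hθ, π₁_e₁]

theorem inv_e (t : D.C₀) : D.inv (D.e t) = D.e t :=
  D.inv_eq_self_of_π₂_e₁ (by rw [← e_d, d_e])

theorem pair_e_d {x : L.B} (h : D.d x = D.c (D.e (D.d x))) :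
    D.pair x (D.e (D.d x)) h = D.e₁ x :=
  (D.eq_pair h (D.π₁_e₁ x) (D.e_d x).symm).symm

theorem pair_e_c {x : L.B} (h : D.d (D.e (D.c x)) = D.c x) :
    D.pair (D.e (D.c x)) x h = D.e₂ x :=
  (D.eq_pair h (D.e_c x).symm (D.π₂_e₂ x)).symm

theorem pair_inv_right {x : L.B} (h : D.d x = D.c (D.inv x)) :
    D.pair x (D.inv x) h = L.φ (D.e₂ x) :=
  (D.eq_pair h (by rw [L.π₁_φ, m_e₂]) rfl).symm

theorem pair_inv_left {x : L.B} (h : D.d (D.inv x) = D.c x) :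
    D.pair (D.inv x) x h = L.θ (D.e₁ x) :=
  (D.eq_pair h (D.π₁_θ_e₁ x) (by rw [L.π₂_θ, m_e₁])).symm

theorem m_pair_assoc {z y x : L.B} (hzy : D.d z = D.c y) (hyx : D.d y = D.c x)
    (h₁ : D.d (L.m (D.pair z y hzy)) = D.c x) (h₂ : D.d z = D.c (L.m (D.pair y x hyx))) :
    L.m (D.pair (L.m (D.pair z y hzy)) x h₁) = L.m (D.pair z (L.m (D.pair y x hyx)) h₂) := by
  obtain ⟨b, b', hb₁, hb₂, hb'₁, hb'₂, hbb'⟩ :=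
    D.assoc (D.pair y x hyx) (D.pair z y hzy) ((D.π₁_pair _).trans (D.π₂_pair _).symm)
  rw [← D.eq_pair h₁ hb₁ (hb₂.trans (D.π₂_pair _)),
    ← D.eq_pair h₂ (hb'₁.trans (D.π₁_pair _)) hb'₂, hbb']

noncomputable def toIntGpd : IntGpd.{u} where
  C₀ := D.C₀
  C₁ := L.B
  d := D.d
  c := D.c
  e := D.e
  i := D.inv
  m y x h := L.m (D.pair y x h)
  de := D.d_e
  ce := D.c_e
  dm _ _ _ := by rw [d_m, π₂_pair]
  cm _ _ _ := by rw [c_m, π₁_pair]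
  di := D.d_inv
  ci := D.c_inv
  ii := D.inv_inv
  ie := D.inv_e
  idr _ _ := by rw [pair_e_d, m_e₁]
  idl _ _ := by rw [pair_e_c, m_e₂]
  invr _ _ := by rw [pair_inv_right, e_c]; rfl
  invl _ _ := by rw [pair_inv_left, e_d]; rfl
  assoc _ _ _ _ _ _ _ := D.m_pair_assoc _ _ _ _

/-- `θ (y, x) = (u, y x)` with `u (y x) = x`, so `u = y⁻¹`. -/
theorem π₁_θ (a : L.A) : L.π₁ (L.θ a) = D.inv (L.π₁ a) := by
  have h : D.d (L.π₁ (L.θ a)) = D.c (L.m a) := by rw [D.comm, L.π₂_θ]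
  refine D.toIntGpd.eq_i_of_m_eq_right (D.comm a) (congrArg L.m (D.pair_π a)) h ?_
  show L.m (D.pair _ _ h) = L.π₂ a
  rw [← D.eq_pair h rfl (L.π₂_θ a)]
  rfl

theorem π₂_φ (a : L.A) : L.π₂ (L.φ a) = D.inv (L.π₂ a) := by
  have h : D.d (L.m a) = D.c (L.π₂ (L.φ a)) := by rw [← D.comm, L.π₁_φ]
  refine D.toIntGpd.eq_i_of_m_eq_left (D.comm a) (congrArg L.m (D.pair_π a)) h ?_
  show L.m (D.pair _ _ h) = L.π₁ a
  rw [← D.eq_pair h (L.π₁_φ a) rfl]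
  rfl

noncomputable def pairEquiv : D.toIntGpd.Pairs ≃ L.A where
  toFun p := D.pair p.1.1 p.1.2 p.2
  invFun a := ⟨(L.π₁ a, L.π₂ a), D.comm a⟩
  left_inv p := Subtype.ext (Prod.ext (D.π₁_pair p.2) (D.π₂_pair p.2))
  right_inv := D.pair_π

noncomputable def isoFObj : FObj D.toIntGpd ≅ L :=
  I2L.isoMk D.pairEquiv (Equiv.refl _)
    (fun p => (D.eq_pair (D.toIntGpd.θp p).2
      ((D.π₁_θ _).trans (congrArg D.inv (D.π₁_pair p.2))) (L.π₂_θ _)).symm)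
    (fun p => (D.eq_pair (D.toIntGpd.φp p).2
      (L.π₁_φ _) ((D.π₂_φ _).trans (congrArg D.inv (D.π₂_pair p.2)))).symm)
    (fun _ => rfl)

end GoodLinkData

instance : (ObjectProperty.lift GoodLink linkFunctor.{u} goodLink_linkFunctor_obj).EssSurj where
  mem_essImage L := by
    obtain ⟨D⟩ := L.property.nonempty_data
    exact ⟨D.toIntGpd, ⟨ObjectProperty.isoMk _ D.isoFObj⟩⟩

/-- **Theorem 1.** The category of internal groupoids (in the category of
types) is equivalent to the full subcategory of involutive-2-links that are
unital and associative, the equivalence being induced by the functor `F`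
sending an internal groupoid to `(θ, φ, m : C₂ → C₁)` with
`θ = ⟨i ∘ π₁, m⟩` and `φ = ⟨m, i ∘ π₂⟩`. -/
theorem internal_groupoids_equiv_unital_associative_involutive_2_links :
    ∃ (F : IntGpd.{u} ⥤ ObjectProperty.FullSubcategory GoodLink.{u})
      (hobj : ∀ G : IntGpd.{u}, (F.obj G).obj = FObj G),
      F.IsEquivalence ∧
      ∀ (G H : IntGpd.{u}) (u : G ⟶ H),
        (ObjectProperty.ι GoodLink).map (F.map u) =
          eqToHom (hobj G) ≫ FHom u ≫ eqToHom (hobj H).symm :=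
  ⟨ObjectProperty.lift GoodLink linkFunctor goodLink_linkFunctor_obj, fun _ => rfl, { },
    fun _ _ _ => rfl⟩
end

section
/- Let G be a groupoid, C₁ its set of morphisms and C₂ its set of composable pairs {(y, x) : dom y = cod x}, with m(y, x) = y∘x. Define θ(y, x) = (y⁻¹, y∘x) and φ(y, x) = (y∘x, x⁻¹). Then θ and φ are well-defined maps C₂ → C₂ satisfying θ∘θ = id, φ∘φ = id and θ∘φ∘θ = φ∘θ∘φ; that is, (θ, φ, m : C₂ → C₁) is an involutive-2-link. -/
open CategoryTheory

universe u v

/-- The set of morphisms of a groupoid `G`, bundled with their (co)domains. -/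
structure GMor (G : Type u) [Groupoid.{v} G] : Type max u v where
  src : G
  tgt : G
  hom : src ⟶ tgt

variable {G : Type u} [Groupoid.{v} G]

/-- Composable pairs `(y, x)` with `dom y = cod x`. -/
def GPairs (G : Type u) [Groupoid.{v} G] : Type max u v :=
  {p : GMor G × GMor G // p.1.src = p.2.tgt}

/-- Composition `m(y, x) = y ∘ x` of a composable pair. -/
def mG : GPairs G → GMor G :=
  fun p => ⟨p.1.2.src, p.1.1.tgt, p.1.2.hom ≫ eqToHom p.2.symm ≫ p.1.1.hom⟩

/-- The inverse of a morphism. -/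
def invG : GMor G → GMor G :=
  fun a => ⟨a.tgt, a.src, Groupoid.inv a.hom⟩

/-- `θ(y, x) = (y⁻¹, y ∘ x)`. -/
def θG : GPairs G → GPairs G := fun p => ⟨(invG p.1.1, mG p), rfl⟩

/-- `φ(y, x) = (y ∘ x, x⁻¹)`. -/
def φG : GPairs G → GPairs G := fun p => ⟨(mG p, invG p.1.2), rfl⟩

namespace GPairs

-- Sharing the middle object definitionally makes the `eqToHom` in `mG` reduce to `𝟙`.
def ofHom {a b c : G} (y : b ⟶ c) (x : a ⟶ b) : GPairs G :=
  ⟨(⟨b, c, y⟩, ⟨a, b, x⟩), rfl⟩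

theorem exists_eq_ofHom (p : GPairs G) :
    ∃ (a b c : G) (y : b ⟶ c) (x : a ⟶ b), p = ofHom y x := by
  obtain ⟨⟨⟨b, c, y⟩, ⟨a, b', x⟩⟩, h : b = b'⟩ := p
  subst h
  exact ⟨a, b, c, y, x, rfl⟩

end GPairs

open GPairs

variable {a b c : G} (y : b ⟶ c) (x : a ⟶ b)

theorem mG_ofHom : mG (ofHom y x) = ⟨a, c, x ≫ y⟩ := by
  rw [mG, ofHom, eqToHom_refl, Category.id_comp]

@[simp]
theorem θG_ofHom : θG (ofHom y x) = ofHom (inv y) (x ≫ y) := by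
  simp only [θG, mG_ofHom, invG, Groupoid.inv_eq_inv]
  rfl

@[simp]
theorem φG_ofHom : φG (ofHom y x) = ofHom (x ≫ y) (inv x) := by
  simp only [φG, mG_ofHom, invG, Groupoid.inv_eq_inv]
  rfl

theorem θG_involutive : Function.Involutive (θG (G := G)) := by
  intro p
  obtain ⟨a, b, c, y, x, rfl⟩ := exists_eq_ofHom p
  simp

theorem φG_involutive : Function.Involutive (φG (G := G)) := by
  intro p
  obtain ⟨a, b, c, y, x, rfl⟩ := exists_eq_ofHom p
  simp

theorem θG_φG_θG_ofHom : θG (φG (θG (ofHom y x))) = ofHom (inv x) (inv y) := by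
  simp

theorem φG_θG_φG_ofHom : φG (θG (φG (ofHom y x))) = ofHom (inv x) (inv y) := by
  simp

theorem θG_φG_θG_eq_φG_θG_φG (p : GPairs G) : θG (φG (θG p)) = φG (θG (φG p)) := by
  obtain ⟨a, b, c, y, x, rfl⟩ := exists_eq_ofHom p
  rw [θG_φG_θG_ofHom, φG_θG_φG_ofHom]

/-- For any groupoid `G`, the maps `θ(y, x) = (y⁻¹, y ∘ x)` and
`φ(y, x) = (y ∘ x, x⁻¹)` are well-defined involutions on the object of
composable pairs, satisfying `θφθ = φθφ`; that is, `(θ, φ, m : C₂ → C₁)`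
is an involutive-2-link. -/
theorem groupoid_involutive_2_link (G : Type u) [Groupoid.{v} G] :
    (θG (G := G)) ∘ θG = id ∧
    (φG (G := G)) ∘ φG = id ∧
    (θG (G := G)) ∘ φG ∘ θG = φG ∘ θG ∘ φG :=
  ⟨θG_involutive.comp_self, φG_involutive.comp_self, funext θG_φG_θG_eq_φG_θG_φG⟩
end

section
/- The maps θ, φ : X² × B → X² × B given by θ(y, x, b) = (ȳ, y·x, b) and φ(y, x, b) = (y·x, x̄, g(ȳ·(y·x), b)) are involutions (θ∘θ = id and φ∘φ = id) if and only if for all x, y ∈ X: x̄̄ = x, ȳ·(y·x) = x, and (y·x)·x̄ = y. Moreover, assuming these conditions, the relation θ∘φ∘θ = φ∘θ∘φ holds if and only if additionally x·(‾(y·x)) = ȳ and (‾(y·x))·y = x̄ for all x, y ∈ X. -/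
universe u

section Link

variable {X B : Type u}

/-- The subset `C₁ = {(x, b) : f(x, b, 1, 0) = x = f(1, 0, x, b)}`. -/
def linkC1 (f : X → B → X → B → X) (one : X) (zero : B) : Set (X × B) :=
  {p | f p.1 p.2 one zero = p.1 ∧ f one zero p.1 p.2 = p.1}

/-- The subset `C₂ = {(y, x, b) : (y, g(x, b)) ∈ C₁ and (x, b) ∈ C₁}`. -/
def linkC2 (f : X → B → X → B → X) (g : X → B → B) (one : X) (zero : B) :
    Set (X × X × B) :=
  {t | ((t.1, g t.2.1 t.2.2) : X × B) ∈ linkC1 f one zero ∧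
    ((t.2.1, t.2.2) : X × B) ∈ linkC1 f one zero}

/-- `m(y, x, b) = (y·x, b)`. -/
def linkM (mul : X → X → X) : X × X × B → X × B :=
  fun t => (mul t.1 t.2.1, t.2.2)

/-- `θ(y, x, b) = (ȳ, y·x, b)`. -/
def linkθ (mul : X → X → X) (bar : X → X) : X × X × B → X × X × B :=
  fun t => (bar t.1, mul t.1 t.2.1, t.2.2)

/-- `φ(y, x, b) = (y·x, x̄, g(ȳ·(y·x), b))`. -/
def linkφ (mul : X → X → X) (bar : X → X) (g : X → B → B) :
    X × X × B → X × X × B :=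
  fun t => (mul t.1 t.2.1, bar t.2.1, g (mul (bar t.1) (mul t.1 t.2.1)) t.2.2)

section Closure

variable (mul : X → X → X) (one : X) (zero : B) (bar : X → X)
  (f : X → B → X → B → X) (g : X → B → B)

/-- Proposition 2 (well-definedness of `m`): if `(y, x, b) ∈ C₂` then
`(y·x, b) ∈ C₁`. -/
theorem linkM_mem
    (hf : ∀ y x b y' x' b', f (mul y x) b (mul y' x') b' =
      mul (f y (g x b) y' (g x' b')) (f x b x' b'))
    (hg10 : g one zero = zero) (h11 : mul one one = one) :
    ∀ t ∈ linkC2 f g one zero, linkM mul t ∈ linkC1 f one zero := by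
  rintro ⟨y, x, b⟩ ⟨⟨h1a, h1b⟩, h2a, h2b⟩
  constructor
  · show f (mul y x) b one zero = mul y x
    calc f (mul y x) b one zero = f (mul y x) b (mul one one) zero := by rw [h11]
      _ = mul (f y (g x b) one (g one zero)) (f x b one zero) := hf ..
      _ = mul y x := by rw [hg10, h1a, h2a]
  · show f one zero (mul y x) b = mul y x
    calc f one zero (mul y x) b = f (mul one one) zero (mul y x) b := by rw [h11]
      _ = mul (f one (g one zero) y (g x b)) (f one zero x b) := hf ..
      _ = mul y x := by rw [hg10, h1b, h2b]

/-- Closure of `C₂` under `θ`. -/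
theorem linkθ_mem
    (hf : ∀ y x b y' x' b', f (mul y x) b (mul y' x') b' =
      mul (f y (g x b) y' (g x' b')) (f x b x' b'))
    (hg : ∀ y x b, g (mul y x) b = g y (g x b))
    (hg10 : g one zero = zero) (h11 : mul one one = one)
    (hstar : ∀ x b, ((x, b) : X × B) ∈ linkC1 f one zero →
      ((bar x, g x b) : X × B) ∈ linkC1 f one zero) :
    ∀ t ∈ linkC2 f g one zero, linkθ mul bar t ∈ linkC2 f g one zero := by
  rintro ⟨y, x, b⟩ ht
  constructor
  · show ((bar y, g (mul y x) b) : X × B) ∈ linkC1 f one zero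
    rw [hg]
    exact hstar y (g x b) ht.1
  · exact linkM_mem mul one zero f g hf hg10 h11 _ ht

/-- Closure of `C₂` under `φ`. -/
theorem linkφ_mem
    (hf : ∀ y x b y' x' b', f (mul y x) b (mul y' x') b' =
      mul (f y (g x b) y' (g x' b')) (f x b x' b'))
    (hg : ∀ y x b, g (mul y x) b = g y (g x b))
    (hg10 : g one zero = zero) (h11 : mul one one = one)
    (hiv' : ∀ x b, g (mul (bar x) x) b = b)
    (hstar : ∀ x b, ((x, b) : X × B) ∈ linkC1 f one zero →
      ((bar x, g x b) : X × B) ∈ linkC1 f one zero)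
    (hcancel : ∀ t ∈ linkC2 f g one zero, mul (bar t.1) (mul t.1 t.2.1) = t.2.1) :
    ∀ t ∈ linkC2 f g one zero, linkφ mul bar g t ∈ linkC2 f g one zero := by
  rintro ⟨y, x, b⟩ ht
  have hx : mul (bar y) (mul y x) = x := hcancel _ ht
  constructor
  · show ((mul y x, g (bar x) (g (mul (bar y) (mul y x)) b)) : X × B) ∈
      linkC1 f one zero
    rw [hx, ← hg, hiv']
    exact linkM_mem mul one zero f g hf hg10 h11 _ ht
  · show ((bar x, g (mul (bar y) (mul y x)) b) : X × B) ∈ linkC1 f one zero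
    rw [hx]
    exact hstar x b ht.2

end Closure

/-- `m` as a map `C₂ → C₁`, given the closure property. -/
def linkMS {f : X → B → X → B → X} {g : X → B → B} {one : X} {zero : B}
    (mul : X → X → X)
    (hm : ∀ t ∈ linkC2 f g one zero, linkM mul t ∈ linkC1 f one zero) :
    linkC2 f g one zero → linkC1 f one zero :=
  fun t => ⟨linkM mul t.1, hm t.1 t.2⟩

/-- `θ` as a map `C₂ → C₂`, given the closure property. -/
def linkθS {f : X → B → X → B → X} {g : X → B → B} {one : X} {zero : B}
    (mul : X → X → X) (bar : X → X)
    (hθ : ∀ t ∈ linkC2 f g one zero, linkθ mul bar t ∈ linkC2 f g one zero) :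
    linkC2 f g one zero → linkC2 f g one zero :=
  fun t => ⟨linkθ mul bar t.1, hθ t.1 t.2⟩

/-- `φ` as a map `C₂ → C₂`, given the closure property. -/
def linkφS {f : X → B → X → B → X} {g : X → B → B} {one : X} {zero : B}
    (mul : X → X → X) (bar : X → X)
    (hφ : ∀ t ∈ linkC2 f g one zero, linkφ mul bar g t ∈ linkC2 f g one zero) :
    linkC2 f g one zero → linkC2 f g one zero :=
  fun t => ⟨linkφ mul bar g t.1, hφ t.1 t.2⟩

end Link

/-- **Proposition 1.** The maps `θ(y,x,b) = (ȳ, y·x, b)` and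
`φ(y,x,b) = (y·x, x̄, g(ȳ·(y·x), b))` on `X² × B` are involutions iff
`x̄̄ = x`, `ȳ·(y·x) = x` and `(y·x)·x̄ = y` hold for all `x, y`; assuming
these, `θφθ = φθφ` holds iff additionally `x·(y·x)‾ = ȳ` and
`(y·x)‾·y = x̄` for all `x, y`. -/
theorem involutions_iff {X B : Type u} (mul : X → X → X) (one : X) (zero : B)
    (bar : X → X) (f : X → B → X → B → X) (g : X → B → B)
    (hf : ∀ y x b y' x' b', f (mul y x) b (mul y' x') b' =
      mul (f y (g x b) y' (g x' b')) (f x b x' b'))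
    (hg : ∀ y x b, g (mul y x) b = g y (g x b))
    (hg10 : g one zero = zero) (h11 : mul one one = one)
    (hiv : ∀ x y b, g (mul (bar x) (mul (bar y) (mul y x))) b = b)
    (hiv' : ∀ x b, g (mul (bar x) x) b = b) :
    ((linkθ (B := B) mul bar ∘ linkθ mul bar = id ∧
      linkφ (B := B) mul bar g ∘ linkφ mul bar g = id) ↔
      ((∀ x, bar (bar x) = x) ∧ (∀ x y, mul (bar y) (mul y x) = x) ∧
        (∀ x y, mul (mul y x) (bar x) = y))) ∧
    (((∀ x, bar (bar x) = x) ∧ (∀ x y, mul (bar y) (mul y x) = x) ∧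
        (∀ x y, mul (mul y x) (bar x) = y)) →
      (linkθ (B := B) mul bar ∘ linkφ mul bar g ∘ linkθ mul bar =
          linkφ mul bar g ∘ linkθ mul bar ∘ linkφ mul bar g ↔
        ((∀ x y, mul x (bar (mul y x)) = bar y) ∧
          (∀ x y, mul (bar (mul y x)) y = bar x)))) := by
  constructor
  · constructor
    · rintro ⟨hθ, hφ⟩
      have hθ' : ∀ y x, (bar (bar y), mul (bar y) (mul y x), zero)
          = ((y, x, zero) : X × X × B) := fun y x => congrFun hθ (y, x, zero)
      have hφ' : ∀ y x, linkφ mul bar g (linkφ mul bar g (y, x, zero))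
          = ((y, x, zero) : X × X × B) := fun y x => congrFun hφ (y, x, zero)
      refine ⟨fun x => ?_, fun x y => (Prod.ext_iff.1
        ((Prod.ext_iff.1 (hθ' y x)).2)).1, fun x y => ?_⟩
      · have := hφ' x x
        simp only [linkφ, Prod.ext_iff] at this
        exact this.2.1
      · have := hφ' y x
        simp only [linkφ, Prod.ext_iff] at this
        exact this.1
    · rintro ⟨hc1, hc2, hc3⟩
      constructor
      · funext ⟨y, x, b⟩
        simp [linkθ, hc1, hc2]
      · funext ⟨y, x, b⟩
        simp only [linkφ, Function.comp_apply, id_eq]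
        rw [hc2 (bar x) (mul y x), hc3 x y, hc2 x y, ← hg, hiv', hc1]
  · rintro ⟨hc1, hc2, hc3⟩
    have key : ∀ y x b,
        linkθ (B := B) mul bar (linkφ mul bar g (linkθ mul bar (y, x, b)))
          = (bar x, mul x (bar (mul y x)), g (mul y x) b) := by
      intro y x b
      simp only [linkθ, linkφ]
      rw [hc2 (mul y x) (bar y), hc2 x y]
    have key2 : ∀ y x b,
        linkφ (B := B) mul bar g (linkθ mul bar (linkφ mul bar g (y, x, b)))
          = (mul (bar (mul y x)) y, bar y, g (mul y x) b) := by
      intro y x b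
      simp only [linkθ, linkφ]
      rw [hc3 x y, hc2 y (bar (mul y x)), hc2 x y, ← hg]
    constructor
    · intro h
      refine ⟨fun x y => ?_, fun x y => ?_⟩
      · have := congrFun h (y, x, zero)
        simp only [Function.comp_apply, key, key2, Prod.ext_iff] at this
        exact this.2.1
      · have := congrFun h (y, x, zero)
        simp only [Function.comp_apply, key, key2, Prod.ext_iff] at this
        exact this.1.symm
    · rintro ⟨h1, h2⟩
      funext ⟨y, x, b⟩
      simp only [Function.comp_apply, key, key2, h1, h2]
end

section
/- The formulas θ(y, x, b) = (ȳ, y·x, b) and φ(y, x, b) = (y·x, x̄, g(ȳ·(y·x), b)) define maps C₂ → C₂ (i.e., C₂ is closed under θ and φ) if and only if the following condition holds: whenever (y, x, b) ∈ C₂, also (x̄, ȳ, g(y·x, b)) ∈ C₂. -/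
universe u

/-- **Proposition 2.** The formulas `θ` and `φ` define maps `C₂ → C₂`
iff whenever `(y, x, b) ∈ C₂` also `(x̄, ȳ, g(y·x, b)) ∈ C₂`. -/
theorem link_maps_well_defined_iff {X B : Type u} (mul : X → X → X) (one : X)
    (zero : B) (bar : X → X) (f : X → B → X → B → X) (g : X → B → B)
    (hf : ∀ y x b y' x' b', f (mul y x) b (mul y' x') b' =
      mul (f y (g x b) y' (g x' b')) (f x b x' b'))
    (hg : ∀ y x b, g (mul y x) b = g y (g x b))
    (hg10 : g one zero = zero) (h11 : mul one one = one)
    (hiv : ∀ x y b, g (mul (bar x) (mul (bar y) (mul y x))) b = b)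
    (hiv' : ∀ x b, g (mul (bar x) x) b = b)
    (hbb : ∀ x, bar (bar x) = x)
    (hc1 : ∀ x y, mul (bar y) (mul y x) = x)
    (hc2 : ∀ x y, mul (mul y x) (bar x) = y)
    (hc3 : ∀ x y, mul x (bar (mul y x)) = bar y)
    (hc4 : ∀ x y, mul (bar (mul y x)) y = bar x) :
    ((∀ t ∈ linkC2 f g one zero, linkθ mul bar t ∈ linkC2 f g one zero) ∧
      (∀ t ∈ linkC2 f g one zero, linkφ mul bar g t ∈ linkC2 f g one zero)) ↔
    (∀ t ∈ linkC2 f g one zero,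
      ((bar t.2.1, bar t.1, g (mul t.1 t.2.1) t.2.2) : X × X × B) ∈
        linkC2 f g one zero) := by
  have hm := linkM_mem mul one zero f g hf hg10 h11
  constructor
  · rintro ⟨hθ, hφ⟩ ⟨y, x, b⟩ ht
    have h1 := (hθ _ ht).1
    have h2 := (hφ _ ht).2
    simp only [linkθ, linkφ] at h1 h2
    refine ⟨?_, ?_⟩
    · show ((bar x, g (bar y) (g (mul y x) b)) : X × B) ∈ linkC1 f one zero
      rw [← hg, hc1]
      rwa [hc1] at h2
    · exact h1
  · intro hσ
    constructor
    · rintro ⟨y, x, b⟩ ht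
      have h := hσ _ ht
      exact ⟨h.2, hm _ ht⟩
    · rintro ⟨y, x, b⟩ ht
      have h := (hσ _ ht).1
      simp only at h
      rw [← hg, hc1] at h
      refine ⟨?_, ?_⟩
      · show ((mul y x, g (bar x) (g (mul (bar y) (mul y x)) b)) : X × B) ∈
          linkC1 f one zero
        rw [hc1, ← hg, hiv']
        exact hm _ ht
      · show ((bar x, g (mul (bar y) (mul y x)) b) : X × B) ∈ linkC1 f one zero
        rwa [hc1]
end

section
/- Suppose that: (⋆) if (x, b) ∈ C₁ then (x̄, g(x, b)) ∈ C₁ and x̄̄ = x; and (⋆⋆) if (y, x, b) ∈ C₂ then ȳ·(y·x) = x, (y·x)·x̄ = y, x·(‾(y·x)) = ȳ and (‾(y·x))·y = x̄. Then (θ, φ, m : C₂ → C₁) is a well-defined involutive-2-link: θ and φ map C₂ into C₂, m maps C₂ into C₁, θ∘θ = id = φ∘φ on C₂, and θ∘φ∘θ = φ∘θ∘φ on C₂. -/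
universe u

/-- **Proposition 3.** Under conditions (⋆) and (⋆⋆), the triple
`(θ, φ, m : C₂ → C₁)` is a well-defined involutive-2-link: `θ` and `φ`
map `C₂` into `C₂`, `m` maps `C₂` into `C₁`, `θ` and `φ` are involutions
on `C₂`, and `θφθ = φθφ` on `C₂`. -/
theorem link_well_defined_involutive_2_link {X B : Type u} (mul : X → X → X)
    (one : X) (zero : B) (bar : X → X) (f : X → B → X → B → X) (g : X → B → B)
    (hf : ∀ y x b y' x' b', f (mul y x) b (mul y' x') b' =
      mul (f y (g x b) y' (g x' b')) (f x b x' b'))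
    (hg : ∀ y x b, g (mul y x) b = g y (g x b))
    (hg10 : g one zero = zero) (h11 : mul one one = one)
    (hiv : ∀ x y b, g (mul (bar x) (mul (bar y) (mul y x))) b = b)
    (hiv' : ∀ x b, g (mul (bar x) x) b = b)
    (hstar : ∀ x b, ((x, b) : X × B) ∈ linkC1 f one zero →
      ((bar x, g x b) : X × B) ∈ linkC1 f one zero ∧ bar (bar x) = x)
    (hstarstar : ∀ t ∈ linkC2 f g one zero,
      mul (bar t.1) (mul t.1 t.2.1) = t.2.1 ∧
      mul (mul t.1 t.2.1) (bar t.2.1) = t.1 ∧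
      mul t.2.1 (bar (mul t.1 t.2.1)) = bar t.1 ∧
      mul (bar (mul t.1 t.2.1)) t.1 = bar t.2.1) :
    (∀ t ∈ linkC2 f g one zero, linkθ mul bar t ∈ linkC2 f g one zero) ∧
    (∀ t ∈ linkC2 f g one zero, linkφ mul bar g t ∈ linkC2 f g one zero) ∧
    (∀ t ∈ linkC2 f g one zero, linkM mul t ∈ linkC1 f one zero) ∧
    (∀ t ∈ linkC2 f g one zero, linkθ mul bar (linkθ mul bar t) = t) ∧
    (∀ t ∈ linkC2 f g one zero, linkφ mul bar g (linkφ mul bar g t) = t) ∧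
    (∀ t ∈ linkC2 f g one zero,
      linkθ mul bar (linkφ mul bar g (linkθ mul bar t)) =
        linkφ mul bar g (linkθ mul bar (linkφ mul bar g t))) := by
  have hstar1 : ∀ x b, ((x, b) : X × B) ∈ linkC1 f one zero →
      ((bar x, g x b) : X × B) ∈ linkC1 f one zero := fun x b h => (hstar x b h).1
  have hcancel : ∀ t ∈ linkC2 f g one zero,
      mul (bar t.1) (mul t.1 t.2.1) = t.2.1 := fun t ht => (hstarstar t ht).1
  have hθmem := linkθ_mem mul one zero bar f g hf hg hg10 h11 hstar1
  have hφmem := linkφ_mem mul one zero bar f g hf hg hg10 h11 hiv' hstar1 hcancel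
  have hMmem := linkM_mem mul one zero f g hf hg10 h11
  refine ⟨hθmem, hφmem, hMmem, ?_, ?_, ?_⟩
  · rintro ⟨y, x, b⟩ ht
    have hbb : bar (bar y) = y := (hstar y (g x b) ht.1).2
    have hc : mul (bar y) (mul y x) = x := hcancel _ ht
    simp only [linkθ, hbb, hc]
  · rintro ⟨y, x, b⟩ ht
    obtain ⟨hc, hc2, hc3, hc4⟩ := hstarstar _ ht
    have hbb : bar (bar x) = x := (hstar x b ht.2).2
    simp only [linkφ]
    dsimp only at hc hc2 hc3 hc4 ⊢
    rw [hc, hc2, hbb]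
    congr 1
    rw [← hg, hc4, hiv']
  · rintro ⟨y, x, b⟩ ht
    obtain ⟨hc, hc2, hc3, hc4⟩ := hstarstar _ ht
    dsimp only at hc hc2 hc3 hc4
    have hbby : bar (bar y) = y := (hstar y (g x b) ht.1).2
    have htθ : linkθ mul bar (y, x, b) ∈ linkC2 f g one zero := hθmem _ ht
    have htφ : linkφ mul bar g (y, x, b) ∈ linkC2 f g one zero := hφmem _ ht
    have htθφ : linkθ mul bar (linkφ mul bar g (y, x, b)) ∈ linkC2 f g one zero :=
      hθmem _ htφ
    have hcθ := hcancel _ htθ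
    have hcθφ := hcancel _ htθφ
    simp only [linkθ, linkφ] at hcθ hcθφ ⊢
    rw [hcθ, hc, hc2, hc3]
    rw [hc2] at hcθφ
    rw [hcθφ, hc4, ← hg]
end

section
/- If for each x ∈ X the element x̄ is the unique element of X satisfying x̄·(x·x̄) = x̄ and (x·x̄)·x = x, then (x̄, g(x, b)) ∈ C₁ whenever (x, b) ∈ C₁. -/
universe u

/-- If for each `x` the element `x̄` is the unique element satisfying
`x̄·(x·x̄) = x̄` and `(x·x̄)·x = x`, then `(x̄, g(x, b)) ∈ C₁` whenever
`(x, b) ∈ C₁`. -/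
theorem bar_mem_C1_of_unique {X B : Type u} (mul : X → X → X) (one : X)
    (zero : B) (bar : X → X) (f : X → B → X → B → X) (g : X → B → B)
    (hf : ∀ y x b y' x' b', f (mul y x) b (mul y' x') b' =
      mul (f y (g x b) y' (g x' b')) (f x b x' b'))
    (hg : ∀ y x b, g (mul y x) b = g y (g x b))
    (hg10 : g one zero = zero) (h11 : mul one one = one)
    (hiv : ∀ x y b, g (mul (bar x) (mul (bar y) (mul y x))) b = b)
    (hiv' : ∀ x b, g (mul (bar x) x) b = b)
    (hbar : ∀ x, mul (bar x) (mul x (bar x)) = bar x ∧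
      mul (mul x (bar x)) x = x ∧
      ∀ z, mul z (mul x z) = z → mul (mul x z) x = x → z = bar x) :
    ∀ x b, ((x, b) : X × B) ∈ linkC1 f one zero →
      ((bar x, g x b) : X × B) ∈ linkC1 f one zero := by
  intro x b hxb
  obtain ⟨h1, h2⟩ := hxb
  obtain ⟨hb1, hb2, huniq⟩ := hbar x
  have e1 : g (bar x) (g x b) = b := by rw [← hg, hiv']
  have e2 : g (mul x (bar x)) (g x b) = g x b := by rw [hg, e1]
  constructor
  · show f (bar x) (g x b) one zero = bar x
    set u := f (bar x) (g x b) one zero with hu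
    have hxu : f (mul x (bar x)) (g x b) one zero = mul x u := by
      conv_lhs => rw [← h11]
      rw [hf, e1, hg10, h1]
    have key1 : mul u (mul x u) = u := by
      have := hf (bar x) (mul x (bar x)) (g x b) one one zero
      rw [h11, hb1, e2, hg10, hxu] at this
      exact this.symm
    have key2 : mul (mul x u) x = x := by
      have := hf (mul x (bar x)) x b one one zero
      rw [h11, hb2, hg10, h1, hxu] at this
      exact this.symm
    exact huniq u key1 key2
  · show f one zero (bar x) (g x b) = bar x
    set v := f one zero (bar x) (g x b) with hv
    have hxv : f one zero (mul x (bar x)) (g x b) = mul x v := by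
      conv_lhs => rw [← h11]
      rw [hf, e1, hg10, h2]
    have key1 : mul v (mul x v) = v := by
      have := hf one one zero (bar x) (mul x (bar x)) (g x b)
      rw [h11, hb1, e2, hg10, hxv] at this
      exact this.symm
    have key2 : mul (mul x v) x = x := by
      have := hf one one zero (mul x (bar x)) x b
      rw [h11, hb2, hg10, h2, hxv] at this
      exact this.symm
    exact huniq v key1 key2
end
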